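/- arXiv:1902.04603 — 3 statements merged into one kernel-verified Lean document; each statement's English description precedes it below -/
import Mathlib

section
/- For every real z with 0 < z < 1, ∫_{−∞}^{∞} t·e^{−z t}/(1 − e^{−t}) dt = ψ¹(1 − z) + ψ¹(z), where ψ¹ is the trigamma function. -/
/-!
For `t > 0` the geometric series gives `t e^{-at} / (1 - e^{-t}) = ∑ₖ t e^{-(a+k)t}`, and
`∫₀^∞ t e^{-(a+k)t} dt = 1/(a+k)²`; the terms are nonnegative, so integrating termwise shows that
the integral over `(0, ∞)` is `ψ¹(a)`. The substitution `t ↦ -t` turns the integrand with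
parameter `z` into the one with parameter `1 - z`, so the integral over `(-∞, 0)` is `ψ¹(1 - z)`.
-/

noncomputable def trigamma (z : ℝ) : ℝ := ∑' k : ℕ, 1 / (z + k)^2

open MeasureTheory Set Real

lemma integral_mul_exp_neg_mul_Ioi {r : ℝ} (hr : 0 < r) :
    ∫ t in Ioi (0 : ℝ), t * exp (-r * t) = 1 / r ^ 2 := by
  have h := integral_rpow_mul_exp_neg_mul_Ioi two_pos hr
  norm_num [Gamma_two] at h
  simpa [neg_mul] using h

-- A non-integrable function has Bochner integral `0`, so a nonzero integral proves integrability.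
lemma integrableOn_mul_exp_neg_mul_Ioi {r : ℝ} (hr : 0 < r) :
    IntegrableOn (fun t => t * exp (-r * t)) (Ioi 0) :=
  Integrable.of_integral_ne_zero (by rw [integral_mul_exp_neg_mul_Ioi hr]; positivity)

lemma hasSum_mul_exp_neg_add_mul (a : ℝ) {t : ℝ} (ht : 0 < t) :
    HasSum (fun k : ℕ => t * exp (-(a + k) * t)) (t * exp (-a * t) / (1 - exp (-t))) := by
  have hq : exp (-t) < 1 := exp_lt_one_iff.mpr (neg_lt_zero.mpr ht)
  have hterm : (fun k : ℕ => t * exp (-(a + k) * t)) =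
      fun k => t * exp (-a * t) * exp (-t) ^ k := by
    ext k
    rw [← exp_nat_mul, mul_assoc, ← exp_add]
    ring_nf
  rw [hterm, div_eq_mul_inv]
  exact (hasSum_geometric_of_lt_one (exp_nonneg _) hq).mul_left _

lemma summable_one_div_add_sq (a : ℝ) : Summable fun k : ℕ => 1 / (a + k) ^ 2 := by
  simpa [add_comm, rpow_two, sq_abs] using (summable_one_div_nat_add_rpow a 2).mpr one_lt_two

lemma trigamma_pos (a : ℝ) : 0 < trigamma a := by
  obtain ⟨k, hk⟩ : ∃ k : ℕ, a + k ≠ 0 := by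
    by_cases h : a = 0
    · exact ⟨1, by simp [h]⟩
    · exact ⟨0, by simpa using h⟩
  exact (summable_one_div_add_sq a).tsum_pos (fun _ => by positivity) k (by positivity)

lemma integral_Ioi_mul_exp_neg_mul_div_eq_trigamma {a : ℝ} (ha : 0 < a) :
    ∫ t in Ioi 0, t * exp (-a * t) / (1 - exp (-t)) = trigamma a := by
  have hint (k : ℕ) : IntegrableOn (fun t => t * exp (-(a + k) * t)) (Ioi 0) :=
    integrableOn_mul_exp_neg_mul_Ioi (by positivity)
  have hval (k : ℕ) : ∫ t in Ioi 0, t * exp (-(a + k) * t) = 1 / (a + k) ^ 2 :=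
    integral_mul_exp_neg_mul_Ioi (by positivity)
  have hnorm (k : ℕ) : ∫ t in Ioi 0, ‖t * exp (-(a + k) * t)‖ = 1 / (a + k) ^ 2 := by
    rw [← hval k]
    refine setIntegral_congr_fun measurableSet_Ioi fun t ht => ?_
    exact norm_of_nonneg (mul_nonneg (le_of_lt ht) (exp_nonneg _))
  have hsum := hasSum_integral_of_summable_integral_norm hint
    (by simpa only [hnorm] using summable_one_div_add_sq a)
  simp only [hval] at hsum
  rw [trigamma, hsum.tsum_eq]
  exact setIntegral_congr_fun measurableSet_Ioi fun t ht =>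
    (hasSum_mul_exp_neg_add_mul a ht).tsum_eq.symm

lemma integrableOn_Ioi_mul_exp_neg_mul_div {a : ℝ} (ha : 0 < a) :
    IntegrableOn (fun t => t * exp (-a * t) / (1 - exp (-t))) (Ioi 0) :=
  Integrable.of_integral_ne_zero
    (by rw [integral_Ioi_mul_exp_neg_mul_div_eq_trigamma ha]; exact (trigamma_pos a).ne')

lemma mul_exp_neg_mul_neg_div (a t : ℝ) :
    -t * exp (-a * -t) / (1 - exp (-(-t))) = t * exp (-(1 - a) * t) / (1 - exp (-t)) := by
  rcases eq_or_ne t 0 with rfl | ht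
  · simp
  have hexp : exp t ≠ 1 := fun h => ht ((exp_eq_one_iff t).mp h)
  rw [neg_neg, neg_mul_neg, show -(1 - a) * t = a * t + -t by ring, exp_add, exp_neg]
  field_simp [sub_ne_zero.mpr hexp, sub_ne_zero.mpr hexp.symm]
  ring

lemma integral_eq_integral_Ioi_comp_neg_add_integral_Ioi {E : Type*} [NormedAddCommGroup E]
    [NormedSpace ℝ E] {f : ℝ → E} (hneg : IntegrableOn (fun t => f (-t)) (Ioi 0))
    (hpos : IntegrableOn f (Ioi 0)) :
    ∫ t, f t = (∫ t in Ioi 0, f (-t)) + ∫ t in Ioi 0, f t := by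
  have hIic : IntegrableOn f (Iic 0) := by
    rw [integrableOn_Iic_iff_integrableOn_Iio,
      ← (Measure.measurePreserving_neg volume).integrableOn_comp_preimage
        (Homeomorph.neg ℝ).measurableEmbedding]
    simpa [Function.comp_def] using hneg
  rw [integral_comp_neg_Ioi, neg_zero, intervalIntegral.integral_Iic_add_Ioi hIic hpos]

theorem stmt_10 (z : ℝ) (h0 : 0 < z) (h1 : z < 1) :
    ∫ t : ℝ, t * Real.exp (-z * t) / (1 - Real.exp (-t)) = trigamma (1 - z) + trigamma z := by
  have hreflect : (fun t => -t * exp (-z * -t) / (1 - exp (-(-t)))) =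
      fun t => t * exp (-(1 - z) * t) / (1 - exp (-t)) :=
    funext (mul_exp_neg_mul_neg_div z)
  have h1z : 0 < 1 - z := sub_pos.mpr h1
  rw [integral_eq_integral_Ioi_comp_neg_add_integral_Ioi
      (by rw [hreflect]; exact integrableOn_Ioi_mul_exp_neg_mul_div h1z)
      (integrableOn_Ioi_mul_exp_neg_mul_div h0), hreflect,
    integral_Ioi_mul_exp_neg_mul_div_eq_trigamma h1z,
    integral_Ioi_mul_exp_neg_mul_div_eq_trigamma h0]
end

section
/- For every real n > 1, ∫₀^∞ (ln x)/(xⁿ + 1) dx = (π²/(4n²)) [ sec²(π/(2n)) − csc²(π/(2n)) ]. -/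
/-!
The Mellin transform of `1 / (1 + t)` is, after the substitution `t = x / (1 - x)`, the beta
integral `B(s, 1 - s) = Γ(s) Γ(1 - s) = π / sin (π s)` on the strip `0 < re s < 1`.
Differentiating in `s` brings down a factor `log t`, so
`∫ t ^ (s - 1) log t / (1 + t) = -π² cos (π s) / sin² (π s)`. The substitution `t = x ^ n`
reduces the theorem to `s = 1 / n`, and the double-angle formulas at `θ = π / (2 n)` give
the stated form.
-/

open MeasureTheory Set Real Filter Topology Asymptotics

lemma image_div_one_sub_Ioo : (fun x : ℝ => x / (1 - x)) '' Ioo 0 1 = Ioi 0 := by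
  ext t
  constructor
  · rintro ⟨x, ⟨hx0, hx1⟩, rfl⟩
    exact div_pos hx0 (sub_pos.mpr hx1)
  · intro (ht : 0 < t)
    refine ⟨t / (1 + t), ⟨by positivity, (div_lt_one (by positivity)).mpr (by linarith)⟩, ?_⟩
    field_simp
    ring

lemma strictMonoOn_div_one_sub : StrictMonoOn (fun x : ℝ => x / (1 - x)) (Ioo 0 1) := by
  intro x hx y hy hxy
  rw [div_lt_div_iff₀ (sub_pos.mpr hx.2) (sub_pos.mpr hy.2)]
  nlinarith

lemma hasDerivAt_div_one_sub {x : ℝ} (hx : x ≠ 1) :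
    HasDerivAt (fun x : ℝ => x / (1 - x)) ((1 - x)⁻¹ ^ 2) x := by
  have h : 1 - x ≠ 0 := sub_ne_zero.mpr (Ne.symm hx)
  refine ((hasDerivAt_id' x).fun_div ((hasDerivAt_id' x).const_sub 1) h).congr_deriv ?_
  field_simp
  ring

namespace Complex

lemma mellin_inv_one_add_eq_betaIntegral (s : ℂ) :
    mellin (fun t : ℝ => (1 + (t : ℂ))⁻¹) s = betaIntegral s (1 - s) := by
  rw [mellin, ← image_div_one_sub_Ioo,
    integral_image_eq_integral_abs_deriv_smul measurableSet_Ioo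
      (fun x hx => (hasDerivAt_div_one_sub hx.2.ne).hasDerivWithinAt)
      strictMonoOn_div_one_sub.injOn,
    betaIntegral, intervalIntegral.integral_of_le zero_le_one, integral_Ioc_eq_integral_Ioo]
  refine setIntegral_congr_fun measurableSet_Ioo fun x ⟨hx0, hx1⟩ => ?_
  have h1x : 0 < 1 - x := sub_pos.mpr hx1
  have h1x' : ((1 - x : ℝ) : ℂ) ≠ 0 := ofReal_ne_zero.mpr h1x.ne'
  have hsplit : (x : ℂ) ^ (s - 1) =
      ((x / (1 - x) : ℝ) : ℂ) ^ (s - 1) * ((1 - x : ℝ) : ℂ) ^ (s - 1) := by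
    rw [← mul_cpow_ofReal_nonneg (div_pos hx0 h1x).le h1x.le, ← ofReal_mul,
      div_mul_cancel₀ _ h1x.ne']
  have hpow : ((1 - x : ℝ) : ℂ) ^ (s - 1) * ((1 - x : ℝ) : ℂ) ^ (1 - s - 1) =
      ((1 - x : ℝ) : ℂ)⁻¹ := by
    rw [← cpow_add _ _ h1x', show s - 1 + (1 - s - 1) = -1 by ring, cpow_neg_one]
  have hone_add : 1 + ((x / (1 - x) : ℝ) : ℂ) = ((1 - x : ℝ) : ℂ)⁻¹ := by
    rw [← ofReal_one, ← ofReal_add, ← ofReal_inv]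
    congr 1
    field_simp
    ring
  rw [show 1 - (x : ℂ) = ((1 - x : ℝ) : ℂ) by push_cast; rfl, hsplit, mul_assoc, hpow, hone_add,
    abs_of_nonneg (by positivity), real_smul, smul_eq_mul]
  push_cast
  field_simp

lemma mellin_inv_one_add {s : ℂ} (hs0 : 0 < s.re) (hs1 : s.re < 1) :
    mellin (fun t : ℝ => (1 + (t : ℂ))⁻¹) s = π / sin (π * s) := by
  have h := Gamma_mul_Gamma_eq_betaIntegral hs0 (by simpa using hs1 : 0 < (1 - s).re)
  rw [add_sub_cancel, Gamma_one, one_mul, Gamma_mul_Gamma_one_sub] at h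
  rw [mellin_inv_one_add_eq_betaIntegral, h]

lemma hasDerivAt_pi_div_sin_pi_mul {s : ℂ} (hs : sin (π * s) ≠ 0) :
    HasDerivAt (fun z : ℂ => π / sin (π * z)) (-(π ^ 2 * cos (π * s)) / sin (π * s) ^ 2) s := by
  have hsin : HasDerivAt (fun z : ℂ => sin (π * z)) (cos (π * s) * π) s := by
    simpa using ((hasDerivAt_id s).const_mul (π : ℂ)).csin
  refine ((hasDerivAt_const s (π : ℂ)).fun_div hsin hs).congr_deriv ?_
  ring

lemma norm_inv_one_add_ofReal {t : ℝ} (ht : 0 ≤ t) : ‖(1 + (t : ℂ))⁻¹‖ = (1 + t)⁻¹ := by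
  rw [norm_inv, ← ofReal_one, ← ofReal_add, Complex.norm_of_nonneg (by positivity)]

lemma mellin_log_smul_inv_one_add {s : ℂ} (hs0 : 0 < s.re) (hs1 : s.re < 1) :
    mellin (fun t : ℝ => Real.log t • (1 + (t : ℂ))⁻¹) s =
      -(π ^ 2 * cos (π * s)) / sin (π * s) ^ 2 := by
  have hs1' : 0 < (1 - s).re := by simpa using hs1
  have hsin : sin (π * s) ≠ 0 := by
    have h : (π : ℂ) / sin (π * s) ≠ 0 := by
      rw [← Gamma_mul_Gamma_one_sub]
      exact mul_ne_zero (Gamma_ne_zero_of_re_pos hs0) (Gamma_ne_zero_of_re_pos hs1')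
    exact (div_ne_zero_iff.mp h).2
  have hfc : LocallyIntegrableOn (fun t : ℝ => (1 + (t : ℂ))⁻¹) (Ioi 0) := by
    refine ContinuousOn.locallyIntegrableOn ?_ measurableSet_Ioi
    refine ContinuousOn.inv₀ (by fun_prop) fun t (ht : 0 < t) => ?_
    rw [← ofReal_one, ← ofReal_add, ofReal_ne_zero]
    positivity
  have hf_top : (fun t : ℝ => (1 + (t : ℂ))⁻¹) =O[atTop] (· ^ (-1 : ℝ)) := by
    refine IsBigO.of_bound 1 ?_
    filter_upwards [eventually_gt_atTop 0] with t ht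
    rw [norm_inv_one_add_ofReal ht.le, one_mul, Real.rpow_neg_one, norm_inv,
      Real.norm_of_nonneg ht.le]
    exact inv_anti₀ ht (by linarith)
  have hf_bot : (fun t : ℝ => (1 + (t : ℂ))⁻¹) =O[𝓝[>] 0] (· ^ (-0 : ℝ)) := by
    refine IsBigO.of_bound 1 ?_
    filter_upwards [self_mem_nhdsWithin] with t (ht : 0 < t)
    rw [norm_inv_one_add_ofReal ht.le, neg_zero, Real.rpow_zero, norm_one, one_mul]
    exact inv_le_one_of_one_le₀ (by linarith)
  have hstrip : mellin (fun t : ℝ => (1 + (t : ℂ))⁻¹) =ᶠ[𝓝 s] fun z => π / sin (π * z) := by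
    filter_upwards [(isOpen_Ioo.preimage continuous_re).mem_nhds ⟨hs0, hs1⟩] with z hz
    exact mellin_inv_one_add hz.1 hz.2
  exact (mellin_hasDerivAt_of_isBigO_rpow hfc hf_top hs1 hf_bot hs0).2.unique
    ((hasDerivAt_pi_div_sin_pi_mul hsin).congr_of_eventuallyEq hstrip)

end Complex

lemma integral_rpow_mul_log_div_one_add {a : ℝ} (ha0 : 0 < a) (ha1 : a < 1) :
    ∫ t in Ioi 0, t ^ (a - 1) * log t / (1 + t) = -(π ^ 2 * cos (π * a)) / sin (π * a) ^ 2 := by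
  have h := Complex.mellin_log_smul_inv_one_add (s := a) (by simpa) (by simpa)
  apply Complex.ofReal_injective
  rw [mellin] at h
  rw [← integral_complex_ofReal]
  convert h using 1
  · refine setIntegral_congr_fun measurableSet_Ioi fun t (ht : 0 < t) => ?_
    push_cast
    rw [Complex.ofReal_cpow ht.le]
    push_cast
    simp only [smul_eq_mul, Complex.real_smul]
    ring
  · push_cast
    rfl

lemma integral_log_div_rpow_add_one {n : ℝ} (hn : n ≠ 0) :
    ∫ x in Ioi 0, log x / (x ^ n + 1) =
      (n * |n|)⁻¹ * ∫ t in Ioi 0, t ^ (1 / n - 1) * log t / (1 + t) := by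
  rw [← integral_comp_rpow_Ioi (fun t => t ^ (1 / n - 1) * log t / (1 + t)) hn,
    ← integral_const_mul]
  refine setIntegral_congr_fun measurableSet_Ioi fun x (hx : 0 < x) => ?_
  have hpow : x ^ (n - 1) * (x ^ n) ^ (1 / n - 1) = 1 := by
    rw [← rpow_mul hx.le, ← rpow_add hx, mul_sub, mul_one_div_cancel hn]
    simp
  have habs : |n| ≠ 0 := abs_ne_zero.mpr hn
  rw [log_rpow hx, smul_eq_mul, add_comm 1, eq_inv_mul_iff_mul_eq₀ (mul_ne_zero hn habs)]
  linear_combination (-(|n| * n * log x / (x ^ n + 1))) * hpow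

lemma neg_cos_two_mul_div_sin_two_mul_sq {θ : ℝ} (hc : cos θ ≠ 0) (hs : sin θ ≠ 0) :
    -cos (2 * θ) / sin (2 * θ) ^ 2 = ((1 / cos θ) ^ 2 - (1 / sin θ) ^ 2) / 4 := by
  rw [cos_two_mul', sin_two_mul]
  field_simp
  ring

theorem stmt_15 (n : ℝ) (hn : 1 < n) :
    ∫ x in Set.Ioi (0:ℝ), Real.log x / (x ^ n + 1) =
      (Real.pi^2 / (4 * n^2)) *
        ((1 / Real.cos (Real.pi / (2*n)))^2 - (1 / Real.sin (Real.pi / (2*n)))^2) := by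
  have hn0 : 0 < n := one_pos.trans hn
  have hθ0 : 0 < π / (2 * n) := by positivity
  have hθ1 : π / (2 * n) < π / 2 := div_lt_div_of_pos_left pi_pos (by norm_num) (by linarith)
  have hcos : cos (π / (2 * n)) ≠ 0 := (cos_pos_of_mem_Ioo ⟨by linarith, hθ1⟩).ne'
  have hsin : sin (π / (2 * n)) ≠ 0 := (sin_pos_of_pos_of_lt_pi hθ0 (by linarith)).ne'
  rw [integral_log_div_rpow_add_one hn0.ne',
    integral_rpow_mul_log_div_one_add (by positivity) ((div_lt_one hn0).mpr hn),
    abs_of_pos hn0, show π * (1 / n) = 2 * (π / (2 * n)) by field_simp,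
    ← mul_neg, mul_div_assoc, neg_cos_two_mul_div_sin_two_mul_sq hcos hsin]
  ring
end

section
/- For every real n > 1, ∫₀^∞ (ln x)/(xⁿ + 1) dx = (1/(4n²)) [ ψ¹(1/2 − 1/(2n)) + ψ¹(1/2 + 1/(2n)) − ψ¹(1 − 1/(2n)) − ψ¹(1/(2n)) ], where ψ¹ is the trigamma function. -/
open Real MeasureTheory Set

section Substitution

variable {E : Type*} [NormedAddCommGroup E] [NormedSpace ℝ E]

lemma image_exp_neg_Ioi_zero : (fun t : ℝ => exp (-t)) '' Ioi 0 = Ioo 0 1 := by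
  ext y
  constructor
  · rintro ⟨t, ht, rfl⟩
    exact ⟨exp_pos _, exp_lt_one_iff.2 (neg_lt_zero.2 ht)⟩
  · rintro ⟨hy0, hy1⟩
    exact ⟨-log y, neg_pos.2 (log_neg hy0 hy1), by simp [exp_log hy0]⟩

lemma injOn_exp_neg_Ioi_zero : InjOn (fun t : ℝ => exp (-t)) (Ioi 0) :=
  (exp_injective.comp neg_injective).injOn

lemma hasDerivWithinAt_exp_neg (s : Set ℝ) (t : ℝ) :
    HasDerivWithinAt (fun t : ℝ => exp (-t)) (-exp (-t)) s t := by
  simpa using ((hasDerivAt_neg t).exp).hasDerivWithinAt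

lemma integral_Ioo_zero_one_eq_integral_comp_exp_neg (g : ℝ → E) :
    ∫ x in Ioo 0 1, g x = ∫ t in Ioi 0, exp (-t) • g (exp (-t)) := by
  rw [← image_exp_neg_Ioi_zero, integral_image_eq_integral_abs_deriv_smul measurableSet_Ioi
    (fun t _ => hasDerivWithinAt_exp_neg _ t) injOn_exp_neg_Ioi_zero]
  simp only [abs_neg, abs_of_pos (exp_pos _)]

lemma integrableOn_Ioo_zero_one_iff_comp_exp_neg (g : ℝ → E) :
    IntegrableOn g (Ioo 0 1) ↔ IntegrableOn (fun t => exp (-t) • g (exp (-t))) (Ioi 0) := by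
  rw [← image_exp_neg_Ioi_zero, integrableOn_image_iff_integrableOn_abs_deriv_smul
    measurableSet_Ioi (fun t _ => hasDerivWithinAt_exp_neg _ t) injOn_exp_neg_Ioi_zero]
  simp only [abs_neg, abs_of_pos (exp_pos _)]

lemma image_inv_Ioo_zero_one : (fun x : ℝ => x⁻¹) '' Ioo 0 1 = Ioi 1 := by
  rw [image_inv_eq_inv, inv_Ioo_0_left one_pos, inv_one]

lemma integral_Ioi_one_eq_integral_comp_inv (g : ℝ → E) :
    ∫ x in Ioi 1, g x = ∫ x in Ioo 0 1, (x ^ 2)⁻¹ • g x⁻¹ := by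
  rw [← image_inv_Ioo_zero_one, integral_image_eq_integral_abs_deriv_smul measurableSet_Ioo
    (fun x hx => (hasDerivAt_inv hx.1.ne').hasDerivWithinAt) inv_injective.injOn]
  simp only [abs_neg, abs_inv, abs_sq]

lemma integrableOn_Ioi_one_iff_comp_inv (g : ℝ → E) :
    IntegrableOn g (Ioi 1) ↔ IntegrableOn (fun x => (x ^ 2)⁻¹ • g x⁻¹) (Ioo 0 1) := by
  rw [← image_inv_Ioo_zero_one, integrableOn_image_iff_integrableOn_abs_deriv_smul
    measurableSet_Ioo (fun x hx => (hasDerivAt_inv hx.1.ne').hasDerivWithinAt) inv_injective.injOn]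
  simp only [abs_neg, abs_inv, abs_sq]

end Substitution

-- In the shape of `integrableOn_rpow_mul_exp_neg_mul_rpow` with `s = p = 1`.
lemma exp_neg_smul_rpow_mul_log (a t : ℝ) :
    exp (-t) • (exp (-t) ^ a * log (exp (-t))) = -(t ^ (1 : ℝ) * exp (-(a + 1) * t ^ (1 : ℝ))) := by
  rw [rpow_one, smul_eq_mul, log_exp, ← exp_mul, show -(a + 1) * t = -t + -t * a by ring, exp_add]
  ring

lemma integrableOn_rpow_mul_log_Ioo {a : ℝ} (ha : -1 < a) :
    IntegrableOn (fun x => x ^ a * log x) (Ioo 0 1) := by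
  rw [integrableOn_Ioo_zero_one_iff_comp_exp_neg]
  simp_rw [exp_neg_smul_rpow_mul_log]
  exact (integrableOn_rpow_mul_exp_neg_mul_rpow (by norm_num) one_pos (by linarith)).neg

lemma integral_rpow_mul_log_Ioo {a : ℝ} (ha : -1 < a) :
    ∫ x in Ioo 0 1, x ^ a * log x = -1 / (a + 1) ^ 2 := by
  rw [integral_Ioo_zero_one_eq_integral_comp_exp_neg]
  simp_rw [exp_neg_smul_rpow_mul_log, rpow_one, neg_mul]
  have hΓ := integral_rpow_mul_exp_neg_mul_Ioi (a := 2) two_pos (show 0 < a + 1 by linarith)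
  simp only [show (2 : ℝ) - 1 = 1 by norm_num, rpow_one, Gamma_two, mul_one, rpow_two] at hΓ
  rw [integral_neg, hΓ]
  field_simp

lemma summable_one_div_add_nat_sq (z : ℝ) : Summable fun k : ℕ => 1 / (z + k) ^ 2 :=
  ((summable_one_div_nat_add_rpow z 2).2 one_lt_two).congr fun k => by
    rw [rpow_two, sq_abs, add_comm]

lemma hasSum_trigamma (z : ℝ) : HasSum (fun k : ℕ => 1 / (z + k) ^ 2) (trigamma z) :=
  (summable_one_div_add_nat_sq z).hasSum

lemma hasSum_one_div_mul_nat_add_sq {b : ℝ} (hb : b ≠ 0) (c : ℝ) :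
    HasSum (fun k : ℕ => 1 / (b * k + c) ^ 2) (trigamma (c / b) / b ^ 2) :=
  ((hasSum_trigamma (c / b)).div_const (b ^ 2)).congr_fun fun k => by
    field_simp
    ring

lemma hasSum_neg_one_pow_div_mul_nat_add_sq {n : ℝ} (hn : n ≠ 0) (c : ℝ) :
    HasSum (fun k : ℕ => (-1) ^ k / (n * k + c) ^ 2)
      ((trigamma (c / (2 * n)) - trigamma ((c + n) / (2 * n))) / (2 * n) ^ 2) := by
  have h2n : 2 * n ≠ 0 := mul_ne_zero two_ne_zero hn
  rw [sub_div, sub_eq_add_neg]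
  refine HasSum.even_add_odd ?_ ?_
  · refine (hasSum_one_div_mul_nat_add_sq h2n c).congr_fun fun k => ?_
    rw [pow_mul, neg_one_sq, one_pow]
    push_cast
    ring
  · refine (hasSum_one_div_mul_nat_add_sq h2n (c + n)).neg.congr_fun fun k => ?_
    rw [pow_succ, pow_mul, neg_one_sq, one_pow]
    push_cast
    ring

section Series

variable {a n : ℝ}

lemma hasSum_rpow_mul_log_div_rpow_add_one {x : ℝ} (hx : x ∈ Ioo (0 : ℝ) 1) (hn : 0 < n) :
    HasSum (fun k : ℕ => (-1) ^ k * (x ^ (n * k + a) * log x)) (x ^ a * log x / (x ^ n + 1)) := by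
  have hxn : |-x ^ n| < 1 := by
    rw [abs_neg, abs_of_pos (rpow_pos_of_pos hx.1 n)]
    exact rpow_lt_one hx.1.le hx.2 hn
  have hgeom := (hasSum_geometric_of_abs_lt_one hxn).mul_right (x ^ a * log x)
  rw [sub_neg_eq_add, add_comm, inv_mul_eq_div] at hgeom
  refine hgeom.congr_fun fun k => ?_
  rw [neg_pow, rpow_add hx.1, rpow_mul hx.1.le, rpow_natCast]
  ring

lemma integrableOn_rpow_mul_log_div_rpow_add_one (ha : -1 < a) (n : ℝ) :
    IntegrableOn (fun x => x ^ a * log x / (x ^ n + 1)) (Ioo 0 1) := by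
  refine (integrableOn_rpow_mul_log_Ioo ha).norm.mono'
    (by fun_prop : Measurable fun x : ℝ => x ^ a * log x / (x ^ n + 1)).aestronglyMeasurable ?_
  filter_upwards [ae_restrict_mem measurableSet_Ioo] with x hx
  have hden : 1 ≤ x ^ n + 1 := le_add_of_nonneg_left (rpow_nonneg hx.1.le n)
  rw [norm_div, Real.norm_of_nonneg (by linarith : 0 ≤ x ^ n + 1)]
  exact div_le_self (norm_nonneg _) hden

lemma hasSum_integral_rpow_mul_log_div_rpow_add_one (ha : -1 < a) (hn : 0 < n) :
    HasSum (fun k : ℕ => -((-1) ^ k / (n * k + (a + 1)) ^ 2))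
      (∫ x in Ioo 0 1, x ^ a * log x / (x ^ n + 1)) := by
  have hexp (k : ℕ) : -1 < n * k + a := by linarith [mul_nonneg hn.le k.cast_nonneg]
  have hint (k : ℕ) : Integrable (fun x => (-1) ^ k * (x ^ (n * k + a) * log x))
      (volume.restrict (Ioo 0 1)) :=
    (integrableOn_rpow_mul_log_Ioo (hexp k)).const_mul _
  have hnorm (k : ℕ) : ∫ x in Ioo 0 1, ‖(-1) ^ k * (x ^ (n * k + a) * log x)‖ =
      1 / (n * k + (a + 1)) ^ 2 := by
    rw [setIntegral_congr_fun measurableSet_Ioo (g := fun x => -(x ^ (n * k + a) * log x))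
      fun x hx => ?_, integral_neg, integral_rpow_mul_log_Ioo (hexp k)]
    · ring
    · rw [norm_mul, norm_pow, norm_neg, norm_one, one_pow, one_mul, Real.norm_of_nonpos]
      exact mul_nonpos_of_nonneg_of_nonpos (rpow_nonneg hx.1.le _) (log_nonpos hx.1.le hx.2.le)
  have hsum := hasSum_integral_of_summable_integral_norm hint
    (by simpa only [hnorm] using (hasSum_one_div_mul_nat_add_sq hn.ne' (a + 1)).summable)
  rw [setIntegral_congr_fun measurableSet_Ioo fun x hx =>
    (hasSum_rpow_mul_log_div_rpow_add_one hx hn).tsum_eq.symm]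
  refine hsum.congr_fun fun k => ?_
  rw [integral_const_mul, integral_rpow_mul_log_Ioo (hexp k)]
  ring

theorem integral_rpow_mul_log_div_rpow_add_one (ha : -1 < a) (hn : 0 < n) :
    ∫ x in Ioo 0 1, x ^ a * log x / (x ^ n + 1) =
      (trigamma ((a + 1 + n) / (2 * n)) - trigamma ((a + 1) / (2 * n))) / (2 * n) ^ 2 := by
  refine (hasSum_integral_rpow_mul_log_div_rpow_add_one ha hn).unique ?_
  rw [← neg_sub, neg_div]
  exact (hasSum_neg_one_pow_div_mul_nat_add_sq hn.ne' (a + 1)).neg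

end Series

lemma inv_sq_smul_log_inv_div {x : ℝ} (hx : 0 < x) (n : ℝ) :
    (x ^ 2)⁻¹ • (log x⁻¹ / (x⁻¹ ^ n + 1)) = -(x ^ (n - 2) * log x / (x ^ n + 1)) := by
  have hxn : 0 < x ^ n := rpow_pos_of_pos hx n
  rw [smul_eq_mul, log_inv, inv_rpow hx.le, rpow_sub hx, rpow_two]
  field_simp
  ring

lemma integral_Ioi_zero_log_div_rpow_add_one {n : ℝ} (hn : 1 < n) :
    ∫ x in Ioi 0, log x / (x ^ n + 1) =
      (∫ x in Ioo 0 1, x ^ (0 : ℝ) * log x / (x ^ n + 1)) -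
        ∫ x in Ioo 0 1, x ^ (n - 2) * log x / (x ^ n + 1) := by
  have hinv : EqOn (fun x => (x ^ 2)⁻¹ • (log x⁻¹ / (x⁻¹ ^ n + 1)))
      (fun x => -(x ^ (n - 2) * log x / (x ^ n + 1))) (Ioo 0 1) :=
    fun x hx => inv_sq_smul_log_inv_div hx.1 n
  have hint₀₁ : IntegrableOn (fun x => log x / (x ^ n + 1)) (Ioo 0 1) := by
    simpa only [rpow_zero, one_mul] using
      integrableOn_rpow_mul_log_div_rpow_add_one (a := 0) (by norm_num) n
  have hint₁ : IntegrableOn (fun x => log x / (x ^ n + 1)) (Ioi 1) := by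
    rw [integrableOn_Ioi_one_iff_comp_inv]
    exact ((integrableOn_rpow_mul_log_div_rpow_add_one (by linarith) n).neg).congr_fun
      hinv.symm measurableSet_Ioo
  rw [← Ioc_union_Ioi_eq_Ioi zero_le_one, setIntegral_union (Ioc_disjoint_Ioi le_rfl)
    measurableSet_Ioi (hint₀₁.congr_set_ae Ioo_ae_eq_Ioc.symm) hint₁,
    integral_Ioc_eq_integral_Ioo, integral_Ioi_one_eq_integral_comp_inv,
    setIntegral_congr_fun measurableSet_Ioo hinv, integral_neg]
  simp only [rpow_zero, one_mul, sub_eq_add_neg]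

theorem stmt_16 (n : ℝ) (hn : 1 < n) :
    ∫ x in Set.Ioi (0:ℝ), Real.log x / (x ^ n + 1) =
      (1 / (4 * n^2)) *
        (trigamma (1/2 - 1/(2*n)) + trigamma (1/2 + 1/(2*n)) -
         trigamma (1 - 1/(2*n)) - trigamma (1/(2*n))) := by
  have hn₀ : 0 < n := by linarith
  rw [integral_Ioi_zero_log_div_rpow_add_one hn,
    integral_rpow_mul_log_div_rpow_add_one (by norm_num) hn₀,
    integral_rpow_mul_log_div_rpow_add_one (by linarith) hn₀]
  have h₁ : ((0 : ℝ) + 1 + n) / (2 * n) = 1 / 2 + 1 / (2 * n) := by field_simp; ring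
  have h₂ : ((0 : ℝ) + 1) / (2 * n) = 1 / (2 * n) := by ring
  have h₃ : (n - 2 + 1 + n) / (2 * n) = 1 - 1 / (2 * n) := by field_simp; ring
  have h₄ : (n - 2 + 1) / (2 * n) = 1 / 2 - 1 / (2 * n) := by field_simp; ring
  rw [h₁, h₂, h₃, h₄]
  ring
end
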